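/- arXiv:2212.09635 — 2 statements merged into one kernel-verified Lean document; each statement's English description precedes it below -/
import Mathlib

section
/- Let B(S,ρ) be a regular Bohr set in a finite abelian group G, let f: G → ℂ be a 1-bounded function, and let A ⊆ B(S, ερ) be a nonempty set with ε ≤ 1/(100|S|). Then |𝔼_{x ∈ B(S,ρ)} f(x) − 𝔼_{x ∈ B(S,ρ)} 𝔼_{y ∈ x + A} f(y)| ≤ 200|S|ε. -/
open scoped BigOperators Classical
open Finset

noncomputable section

variable {G : Type*} [AddCommGroup G] [Fintype G]

/-- The Bohr set `B(S, ρ)` in a finite abelian group `G`, where frequencies are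
homomorphisms into `ℝ/ℤ`. -/
def bohr (S : Finset (G →+ AddCircle (1 : ℝ))) (ρ : ℝ) : Finset G :=
  Finset.univ.filter fun x => ∀ α ∈ S, ‖α x‖ < ρ

/-- `B(S, ρ)` is a regular Bohr set. -/
def IsRegularBohr (S : Finset (G →+ AddCircle (1 : ℝ))) (ρ : ℝ) : Prop :=
  ∀ ε : ℝ, 0 < ε → ε ≤ 1 / (100 * S.card) →
    ((bohr S ρ).card : ℝ) * (1 - 100 * S.card * ε) ≤ ((bohr S (ρ * (1 + ε))).card : ℝ) ∧
    ((bohr S (ρ * (1 + ε))).card : ℝ) ≤ ((bohr S ρ).card : ℝ) * (1 + 100 * S.card * ε)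

/-- Localization lemma: averaging a `1`-bounded function over a regular Bohr set
changes by at most `200|S|ε` when one additionally averages over translates by a
set `A ⊆ B(S, ερ)`. -/
theorem localization_lemma
    (S : Finset (G →+ AddCircle (1 : ℝ))) (ρ ε : ℝ) (hρ : 0 < ρ) (hε : 0 < ε)
    (hreg : IsRegularBohr S ρ)
    (hε' : ε ≤ 1 / (100 * S.card))
    (f : G → ℂ) (hf : ∀ x, ‖f x‖ ≤ 1)
    (A : Finset G) (hA : A ⊆ bohr S (ε * ρ)) (hAne : A.Nonempty) :
    ‖(∑ x ∈ bohr S ρ, f x) / ((bohr S ρ).card : ℂ) -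
      (∑ x ∈ bohr S ρ, (∑ a ∈ A, f (x + a)) / (A.card : ℂ)) / ((bohr S ρ).card : ℂ)‖ ≤
      200 * S.card * ε := by
  classical
  set B : Finset G := bohr S ρ with hB
  set B' : Finset G := bohr S (ρ * (1 + ε)) with hB'
  have h0B : (0 : G) ∈ B := by
    simp only [hB, bohr, Finset.mem_filter, Finset.mem_univ, true_and]
    intro α hα
    simpa using hρ
  have hBpos : 0 < B.card := Finset.card_pos.2 ⟨0, h0B⟩
  have hApos : 0 < A.card := Finset.card_pos.2 hAne
  have hBB' : B ⊆ B' := by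
    intro x hx
    simp only [hB, hB', bohr, Finset.mem_filter, Finset.mem_univ, true_and] at hx ⊢
    intro α hα
    have h1 := hx α hα
    nlinarith [norm_nonneg (α x)]
  have hreg' := hreg ε hε hε'
  have hcard : (B'.card : ℝ) - B.card ≤ 100 * S.card * ε * B.card := by
    have h2 := hreg'.2
    nlinarith
  have key : ∀ a ∈ A,
      ‖(∑ x ∈ B, f x) - ∑ x ∈ B, f (x + a)‖ ≤ 2 * (100 * S.card * ε * B.card) := by
    intro a ha
    have himg : ∑ x ∈ B, f (x + a) = ∑ y ∈ B.image (· + a), f y := by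
      rw [Finset.sum_image]
      intro x _ y _ h
      exact add_right_cancel h
    rw [himg]
    set T : Finset G := B.image (· + a) with hT
    have hTcard : T.card = B.card :=
      Finset.card_image_of_injective _ (add_left_injective a)
    have hTB' : T ⊆ B' := by
      intro x hx
      obtain ⟨y, hy, rfl⟩ := Finset.mem_image.1 hx
      simp only [hB, hB', bohr, Finset.mem_filter, Finset.mem_univ, true_and] at hy ⊢
      intro α hα
      have h1 := hy α hα
      have h2 : ‖α a‖ < ε * ρ := by
        have := hA ha
        simp only [bohr, Finset.mem_filter, Finset.mem_univ, true_and] at this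
        exact this α hα
      calc ‖α (y + a)‖ = ‖α y + α a‖ := by rw [map_add]
        _ ≤ ‖α y‖ + ‖α a‖ := norm_add_le _ _
        _ < ρ + ε * ρ := by linarith
        _ = ρ * (1 + ε) := by ring
    have cTB : ((T \ B).card : ℝ) ≤ (B'.card : ℝ) - B.card := by
      have hsub : T \ B ⊆ B' \ B := Finset.sdiff_subset_sdiff hTB' le_rfl
      have h3 := Finset.card_le_card hBB'
      have h1 : ((T \ B).card : ℝ) ≤ ((B' \ B).card : ℝ) := by
        exact_mod_cast Finset.card_le_card hsub
      rw [Finset.card_sdiff_of_subset hBB', Nat.cast_sub h3] at h1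
      exact h1
    have cBT : ((B \ T).card : ℝ) ≤ (B'.card : ℝ) - B.card := by
      have e1 := Finset.card_sdiff_add_card_inter B T
      have e2 := Finset.card_sdiff_add_card_inter T B
      have e3 : (B ∩ T).card = (T ∩ B).card := by rw [Finset.inter_comm]
      have : (B \ T).card = (T \ B).card := by omega
      rw [this]; exact cTB
    have hdiff : (∑ x ∈ B, f x) - ∑ y ∈ T, f y
        = (∑ x ∈ B \ T, f x) - ∑ y ∈ T \ B, f y := by
      rw [Finset.sum_sdiff_sub_sum_sdiff]
    rw [hdiff]
    have hb1 : ‖∑ x ∈ B \ T, f x‖ ≤ ((B \ T).card : ℝ) := by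
      calc ‖∑ x ∈ B \ T, f x‖ ≤ ∑ x ∈ B \ T, ‖f x‖ := norm_sum_le _ _
        _ ≤ ∑ _x ∈ B \ T, (1 : ℝ) := Finset.sum_le_sum fun x _ => hf x
        _ = ((B \ T).card : ℝ) := by simp
    have hb2 : ‖∑ x ∈ T \ B, f x‖ ≤ ((T \ B).card : ℝ) := by
      calc ‖∑ x ∈ T \ B, f x‖ ≤ ∑ x ∈ T \ B, ‖f x‖ := norm_sum_le _ _
        _ ≤ ∑ _x ∈ T \ B, (1 : ℝ) := Finset.sum_le_sum fun x _ => hf x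
        _ = ((T \ B).card : ℝ) := by simp
    calc ‖(∑ x ∈ B \ T, f x) - ∑ y ∈ T \ B, f y‖
        ≤ ‖∑ x ∈ B \ T, f x‖ + ‖∑ y ∈ T \ B, f y‖ := norm_sub_le _ _
      _ ≤ ((B'.card : ℝ) - B.card) + ((B'.card : ℝ) - B.card) := by
          linarith
      _ ≤ 2 * (100 * S.card * ε * B.card) := by linarith
  -- rewrite the main expression
  have hBne : ((B.card : ℂ)) ≠ 0 := by
    exact_mod_cast Nat.cast_ne_zero.2 hBpos.ne'
  have hAneC : ((A.card : ℂ)) ≠ 0 := by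
    exact_mod_cast Nat.cast_ne_zero.2 hApos.ne'
  have hmain : (∑ x ∈ B, f x) / ((B.card : ℂ)) -
      (∑ x ∈ B, (∑ a ∈ A, f (x + a)) / (A.card : ℂ)) / ((B.card : ℂ))
      = (∑ a ∈ A, ((∑ x ∈ B, f x) - ∑ x ∈ B, f (x + a)))
        / ((A.card : ℂ) * (B.card : ℂ)) := by
    rw [Finset.sum_sub_distrib, Finset.sum_const, Finset.sum_comm]
    have : ∑ x ∈ B, (∑ a ∈ A, f (x + a)) / (A.card : ℂ)
        = (∑ x ∈ B, ∑ a ∈ A, f (x + a)) / (A.card : ℂ) := by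
      rw [Finset.sum_div]
    rw [this, Finset.sum_comm]
    field_simp
    ring
  rw [hmain, norm_div]
  have hnorm : ‖∑ a ∈ A, ((∑ x ∈ B, f x) - ∑ x ∈ B, f (x + a))‖
      ≤ (A.card : ℝ) * (2 * (100 * S.card * ε * B.card)) := by
    calc ‖∑ a ∈ A, ((∑ x ∈ B, f x) - ∑ x ∈ B, f (x + a))‖
        ≤ ∑ a ∈ A, ‖(∑ x ∈ B, f x) - ∑ x ∈ B, f (x + a)‖ := norm_sum_le _ _
      _ ≤ ∑ _a ∈ A, 2 * (100 * S.card * ε * B.card) :=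
          Finset.sum_le_sum key
      _ = (A.card : ℝ) * (2 * (100 * S.card * ε * B.card)) := by
          rw [Finset.sum_const, nsmul_eq_mul]
  have hden : ‖(A.card : ℂ) * (B.card : ℂ)‖ = (A.card : ℝ) * (B.card : ℝ) := by
    rw [norm_mul]
    simp
  rw [hden]
  rw [div_le_iff₀ (by positivity)]
  calc ‖∑ a ∈ A, ((∑ x ∈ B, f x) - ∑ x ∈ B, f (x + a))‖
      ≤ (A.card : ℝ) * (2 * (100 * S.card * ε * B.card)) := hnorm
    _ = 200 * S.card * ε * ((A.card : ℝ) * B.card) := by ring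

end
end

section
/- Let φ: B(S,16ρ) → ℝ/ℤ be a locally quadratic form on a Bohr set B(S,16ρ) in a finite abelian group, and define φ''(a,b) := φ(a+b) − φ(a) − φ(b) + φ(0) for a,b ∈ B(S,ρ). Then φ'' is bilinear in the local sense: whenever a, c, a+c, b ∈ B(S,ρ) and all relevant sums lie in B(S,16ρ), φ''(a+c, b) = φ''(a,b) + φ''(c,b), and similarly in the second argument. -/
open scoped BigOperators Classical
open Finset

noncomputable section

variable {G : Type*} [AddCommGroup G] [Fintype G]

/-- `φ` is locally quadratic on `B(S, 16ρ)`: every triple discrete derivative vanishes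
whenever all eight points of the cube lie in `B(S, 16ρ)`. -/
def IsLocallyQuadratic (S : Finset (G →+ AddCircle (1 : ℝ))) (ρ : ℝ)
    (φ : G → AddCircle (1 : ℝ)) : Prop :=
  ∀ x h₁ h₂ h₃ : G,
    (x ∈ bohr S (16 * ρ)) → (x + h₁ ∈ bohr S (16 * ρ)) → (x + h₂ ∈ bohr S (16 * ρ)) →
    (x + h₃ ∈ bohr S (16 * ρ)) → (x + h₁ + h₂ ∈ bohr S (16 * ρ)) →
    (x + h₁ + h₃ ∈ bohr S (16 * ρ)) → (x + h₂ + h₃ ∈ bohr S (16 * ρ)) →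
    (x + h₁ + h₂ + h₃ ∈ bohr S (16 * ρ)) →
      φ (x + h₁ + h₂ + h₃) - φ (x + h₁ + h₂) - φ (x + h₁ + h₃) - φ (x + h₂ + h₃)
        + φ (x + h₁) + φ (x + h₂) + φ (x + h₃) - φ x = 0


lemma bohr_mono {S : Finset (G →+ AddCircle (1 : ℝ))} {ρ ρ' : ℝ} (h : ρ ≤ ρ')
    {x : G} (hx : x ∈ bohr S ρ) : x ∈ bohr S ρ' := by
  simp only [bohr, Finset.mem_filter, Finset.mem_univ, true_and] at *
  exact fun α hα => lt_of_lt_of_le (hx α hα) h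

lemma zero_mem_bohr {S : Finset (G →+ AddCircle (1 : ℝ))} {ρ : ℝ} (hρ : 0 < ρ) :
    (0 : G) ∈ bohr S ρ := by
  simp only [bohr, Finset.mem_filter, Finset.mem_univ, true_and]
  intro α _
  simp [map_zero, hρ]

/-- The associated bilinear form `φ''(a,b) = φ(a+b) − φ(a) − φ(b) + φ(0)` of a locally
quadratic form `φ` is bilinear in the local sense, in both arguments. -/
theorem bilinearity_of_second_derivative
    (S : Finset (G →+ AddCircle (1 : ℝ))) (ρ : ℝ) (hρ : 0 < ρ)
    (φ : G → AddCircle (1 : ℝ)) (hφ : IsLocallyQuadratic S ρ φ) :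
    -- additivity in the first argument
    (∀ a b c : G, a ∈ bohr S ρ → b ∈ bohr S ρ → c ∈ bohr S ρ → a + c ∈ bohr S ρ →
      a + b ∈ bohr S (16 * ρ) → c + b ∈ bohr S (16 * ρ) → a + c + b ∈ bohr S (16 * ρ) →
      φ (a + c + b) - φ (a + c) - φ b + φ 0 =
        (φ (a + b) - φ a - φ b + φ 0) + (φ (c + b) - φ c - φ b + φ 0)) ∧
    -- additivity in the second argument
    (∀ a b c : G, a ∈ bohr S ρ → b ∈ bohr S ρ → c ∈ bohr S ρ → b + c ∈ bohr S ρ →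
      a + b ∈ bohr S (16 * ρ) → a + c ∈ bohr S (16 * ρ) → a + (b + c) ∈ bohr S (16 * ρ) →
      φ (a + (b + c)) - φ a - φ (b + c) + φ 0 =
        (φ (a + b) - φ a - φ b + φ 0) + (φ (a + c) - φ a - φ c + φ 0)) := by
  have h16 : ρ ≤ 16 * ρ := by nlinarith
  have h0 : (0 : G) ∈ bohr S (16 * ρ) := zero_mem_bohr (by linarith)
  constructor
  · intro a b c ha hb hc hac hab hcb hacb
    have key := hφ 0 a c b h0 (by simpa using bohr_mono h16 ha)
      (by simpa using bohr_mono h16 hc) (by simpa using bohr_mono h16 hb)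
      (by simpa using bohr_mono h16 hac) (by simpa using hab)
      (by simpa using hcb) (by simpa using hacb)
    simp only [zero_add] at key
    have : (φ (a + c + b) - φ (a + c) - φ b + φ 0) -
        ((φ (a + b) - φ a - φ b + φ 0) + (φ (c + b) - φ c - φ b + φ 0)) = 0 := by
      calc (φ (a + c + b) - φ (a + c) - φ b + φ 0) -
          ((φ (a + b) - φ a - φ b + φ 0) + (φ (c + b) - φ c - φ b + φ 0))
          = φ (a + c + b) - φ (a + c) - φ (a + b) - φ (c + b)
            + φ a + φ c + φ b - φ 0 := by abel
        _ = 0 := key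
    exact sub_eq_zero.mp this
  · intro a b c ha hb hc hbc hab hac habc
    have key := hφ 0 b c a h0 (by simpa using bohr_mono h16 hb)
      (by simpa using bohr_mono h16 hc) (by simpa using bohr_mono h16 ha)
      (by simpa using bohr_mono h16 hbc)
      (by simpa [add_comm b a] using hab)
      (by simpa [add_comm c a] using hac)
      (by simpa [show b + c + a = a + (b + c) by abel] using habc)
    simp only [zero_add] at key
    have : (φ (a + (b + c)) - φ a - φ (b + c) + φ 0) -
        ((φ (a + b) - φ a - φ b + φ 0) + (φ (a + c) - φ a - φ c + φ 0)) = 0 := by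
      calc (φ (a + (b + c)) - φ a - φ (b + c) + φ 0) -
          ((φ (a + b) - φ a - φ b + φ 0) + (φ (a + c) - φ a - φ c + φ 0))
          = φ (b + c + a) - φ (b + c) - φ (b + a) - φ (c + a)
            + φ b + φ c + φ a - φ 0 := by
            rw [show b + c + a = a + (b + c) by abel, add_comm b a, add_comm c a]; abel
        _ = 0 := key
    exact sub_eq_zero.mp this


end
end
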